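/- (Von Neumann Minimax, vector form) Let n ≥ 1 and m ≥ 1, and let a₁, …, a_m ∈ ℝ^n. Then min over x in the simplex S_n of (max over y in the simplex S_m of ∑_{i=1}^m y_i (a_iᵀ x)) equals max over y in S_m of (min over x in S_n of ∑_{i=1}^m y_i (a_iᵀ x)); all the indicated extrema are attained. -/

import Mathlib

/-!
A saddle point `(p, q)` of the payoff on `Sₙ × Sₘ` gives the common value of both sides:
its payoff is the inner maximum at `p`, the inner minimum at `q`, and it lies below every
inner maximum and above every inner minimum. Such a saddle point exists by Sion's minimax
theorem, since the payoff is bilinear, hence continuous and convex-concave, and simplices are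
compact and convex.
-/

open BigOperators

def unitSimplex (k : ℕ) : Set (Fin k → ℝ) :=
  {u | (∑ i, u i) = 1 ∧ ∀ i, 0 ≤ u i}

section SaddlePoint

variable {E F β : Type*} [Preorder β] {X : Set E} {Y : Set F} {f : E → F → β} {p : E} {q : F}

theorem IsSaddlePointOn.isLeast_innerMax (h : IsSaddlePointOn X Y f p q) (hp : p ∈ X)
    (hq : q ∈ Y) :
    IsLeast {r | ∃ x ∈ X, IsGreatest {s | ∃ y ∈ Y, s = f x y} r} (f p q) := by
  refine ⟨⟨p, hp, ⟨q, hq, rfl⟩, ?_⟩, ?_⟩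
  · rintro _ ⟨y, hy, rfl⟩
    exact h p hp y hy
  · rintro r ⟨x, hx, hr⟩
    exact (h x hx q hq).trans (hr.2 ⟨q, hq, rfl⟩)

theorem IsSaddlePointOn.isGreatest_innerMin (h : IsSaddlePointOn X Y f p q) (hp : p ∈ X)
    (hq : q ∈ Y) :
    IsGreatest {r | ∃ y ∈ Y, IsLeast {s | ∃ x ∈ X, s = f x y} r} (f p q) := by
  refine ⟨⟨q, hq, ⟨p, hp, rfl⟩, ?_⟩, ?_⟩
  · rintro _ ⟨x, hx, rfl⟩
    exact h x hx q hq
  · rintro r ⟨y, hy, hr⟩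
    exact (hr.2 ⟨p, hp, rfl⟩).trans (h p hp y hy)

end SaddlePoint

section Compact

variable {α β : Type*} [TopologicalSpace α] [LinearOrder β] [TopologicalSpace β]
  {s : Set α} {g : α → β}

theorem IsCompact.exists_isGreatest_setOf_eq [ClosedIciTopology β] (hs : IsCompact s)
    (hne : s.Nonempty) (hg : ContinuousOn g s) :
    ∃ M, IsGreatest {t | ∃ y ∈ s, t = g y} M := by
  obtain ⟨y₀, hy₀, hmax⟩ := hs.exists_isMaxOn hne hg
  exact ⟨g y₀, ⟨y₀, hy₀, rfl⟩, by rintro _ ⟨y, hy, rfl⟩; exact hmax hy⟩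

theorem IsCompact.exists_isLeast_setOf_eq [ClosedIicTopology β] (hs : IsCompact s)
    (hne : s.Nonempty) (hg : ContinuousOn g s) :
    ∃ m, IsLeast {t | ∃ y ∈ s, t = g y} m := by
  obtain ⟨y₀, hy₀, hmin⟩ := hs.exists_isMinOn hne hg
  exact ⟨g y₀, ⟨y₀, hy₀, rfl⟩, by rintro _ ⟨y, hy, rfl⟩; exact hmin hy⟩

end Compact

section Bilinear

variable {E F : Type*} [AddCommGroup E] [Module ℝ E] [TopologicalSpace E]
  [IsTopologicalAddGroup E] [ContinuousSMul ℝ E] [T2Space E] [FiniteDimensional ℝ E]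
  [AddCommGroup F] [Module ℝ F] [TopologicalSpace F]
  [IsTopologicalAddGroup F] [ContinuousSMul ℝ F] [T2Space F] [FiniteDimensional ℝ F]

theorem LinearMap.exists_isSaddlePointOn (B : E →ₗ[ℝ] F →ₗ[ℝ] ℝ)
    {X : Set E} {Y : Set F}
    (hXne : X.Nonempty) (hXc : Convex ℝ X) (hXk : IsCompact X)
    (hYne : Y.Nonempty) (hYc : Convex ℝ Y) (hYk : IsCompact Y) :
    ∃ p ∈ X, ∃ q ∈ Y, IsSaddlePointOn X Y (fun x y => B x y) p q :=
  Sion.exists_isSaddlePointOn hXne hXc hXk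
    (fun y _ =>
      (B.flip y).continuous_of_finiteDimensional.lowerSemicontinuous.lowerSemicontinuousOn X)
    (fun y _ => ((B.flip y).convexOn hXc).quasiconvexOn) hYc hYne hYk
    (fun x _ =>
      (B x).continuous_of_finiteDimensional.upperSemicontinuous.upperSemicontinuousOn Y)
    (fun x _ => ((B x).concaveOn hYc).quasiconcaveOn)

end Bilinear

theorem unitSimplex_eq_stdSimplex (k : ℕ) : unitSimplex k = stdSimplex ℝ (Fin k) := by
  ext u
  simp [unitSimplex, stdSimplex, and_comm]

theorem unitSimplex_nonempty {k : ℕ} (hk : 1 ≤ k) : (unitSimplex k).Nonempty :=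
  ⟨Pi.single ⟨0, hk⟩ 1, unitSimplex_eq_stdSimplex k ▸ single_mem_stdSimplex ℝ _⟩

/-- **Von Neumann Minimax Theorem (vector form).** Given `a 1, …, a m ∈ ℝⁿ`,
`min_{x ∈ Sₙ} max_{y ∈ Sₘ} ∑ yᵢ (aᵢᵀ x) = max_{y ∈ Sₘ} min_{x ∈ Sₙ} ∑ yᵢ (aᵢᵀ x)`,
with all indicated extrema attained. -/
theorem vonNeumann_minimax_vector {n m : ℕ} (hn : 1 ≤ n) (hm : 1 ≤ m)
    (a : Fin m → (Fin n → ℝ)) :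
    (∀ x ∈ unitSimplex n, ∃ g : ℝ,
      IsGreatest {s : ℝ | ∃ y ∈ unitSimplex m, s = ∑ i, y i * (∑ j, a i j * x j)} g) ∧
    (∀ y ∈ unitSimplex m, ∃ l : ℝ,
      IsLeast {s : ℝ | ∃ x ∈ unitSimplex n, s = ∑ i, y i * (∑ j, a i j * x j)} l) ∧
    ∃ v : ℝ,
      IsLeast {r : ℝ | ∃ x ∈ unitSimplex n,
        IsGreatest {s : ℝ | ∃ y ∈ unitSimplex m, s = ∑ i, y i * (∑ j, a i j * x j)} r} v ∧
      IsGreatest {r : ℝ | ∃ y ∈ unitSimplex m,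
        IsLeast {s : ℝ | ∃ x ∈ unitSimplex n, s = ∑ i, y i * (∑ j, a i j * x j)} r} v := by
  have hSn := unitSimplex_nonempty hn
  have hSm := unitSimplex_nonempty hm
  simp only [unitSimplex_eq_stdSimplex] at hSn hSm ⊢
  have hpayoff : ∀ x y, (Matrix.toLinearMap₂' ℝ (Matrix.of a)).flip x y =
      ∑ i, y i * ∑ j, a i j * x j := fun x y => by
    simp [Matrix.toLinearMap₂'_apply', dotProduct, Matrix.mulVec]
  obtain ⟨p, hp, q, hq, hpq⟩ :=
    (Matrix.toLinearMap₂' ℝ (Matrix.of a)).flip.exists_isSaddlePointOn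
      hSn (convex_stdSimplex ℝ _) (isCompact_stdSimplex _ _)
      hSm (convex_stdSimplex ℝ _) (isCompact_stdSimplex _ _)
  simp only [hpayoff] at hpq
  exact ⟨fun x _ => (isCompact_stdSimplex _ _).exists_isGreatest_setOf_eq hSm (by fun_prop),
    fun y _ => (isCompact_stdSimplex _ _).exists_isLeast_setOf_eq hSn (by fun_prop),
    _, hpq.isLeast_innerMax hp hq, hpq.isGreatest_innerMin hp hq⟩
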